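/- arXiv:2012.03923 — 4 statements merged into one kernel-verified Lean document; each statement's English description precedes it below -/
import Mathlib

section
/- Let H be a class of Boolean-valued functions on a domain X and let S ⊆ X with VC dimension d = VC_S(H). Then the number of labellings of S realized by H is at most the number of subsets of S shattered by H, which is at most ∑_{i=0}^d C(|S|, i). -/
/-- A class `H` of Boolean-valued functions shatters a finite set `T`
if every labelling of `T` is realized by some member of `H`. -/
def Shatters {X : Type*} (H : Set (X → Bool)) (T : Finset X) : Prop :=
  ∀ ℓ : X → Bool, ∃ h ∈ H, ∀ x ∈ T, h x = ℓ x

/-- The VC dimension of `H` with respect to a finite set `S`. -/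
noncomputable def vcDim {X : Type*} (H : Set (X → Bool)) (S : Finset X) : ℕ :=
  sSup {k | ∃ T ⊆ S, T.card = k ∧ Shatters H T}

/-- Sauer–Shelah–Perles: the number of labellings of `S` realized by `H` is at most
the number of shattered subsets of `S`, which is at most `∑_{i=0}^d C(|S|,i)`
where `d = VC_S(H)`. -/
theorem sauer_shelah_perles {X : Type*} (H : Set (X → Bool)) (S : Finset X)
    (d : ℕ) (hd : d = vcDim H S) :
    Set.ncard {ℓ : (↥S) → Bool | ∃ h ∈ H, ∀ x : ↥S, h x = ℓ x} ≤
      Set.ncard {T : Finset X | T ⊆ S ∧ Shatters H T} ∧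
    Set.ncard {T : Finset X | T ⊆ S ∧ Shatters H T} ≤
      ∑ i ∈ Finset.range (d + 1), (S.card).choose i := by
  classical
  set L : Set ((↥S) → Bool) := {ℓ | ∃ h ∈ H, ∀ x : ↥S, h x = ℓ x} with hLdef
  set Tset : Set (Finset X) := {T : Finset X | T ⊆ S ∧ Shatters H T} with hTdef
  set F : ((↥S) → Bool) → Finset X :=
    fun ℓ => (S.attach.filter fun x => ℓ x = true).image Subtype.val with hFdef
  have hmemF : ∀ (ℓ : (↥S) → Bool) (x : X) (hx : x ∈ S), x ∈ F ℓ ↔ ℓ ⟨x, hx⟩ = true := by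
    intro ℓ x hx
    constructor
    · intro hxF
      simp only [hFdef, Finset.mem_image, Finset.mem_filter, Finset.mem_attach, true_and] at hxF
      obtain ⟨⟨y, hy⟩, hly, rfl⟩ := hxF
      exact hly
    · intro hl
      simp only [hFdef, Finset.mem_image, Finset.mem_filter, Finset.mem_attach, true_and]
      exact ⟨⟨x, hx⟩, hl, rfl⟩
  have hFsub : ∀ ℓ, F ℓ ⊆ S := by
    intro ℓ x hxF
    simp only [hFdef, Finset.mem_image] at hxF
    obtain ⟨⟨y, hy⟩, _, rfl⟩ := hxF
    exact hy
  have hFinj : Function.Injective F := by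
    intro ℓ ℓ' h
    funext x
    obtain ⟨x, hx⟩ := x
    have h1 : (ℓ ⟨x, hx⟩ = true) ↔ (ℓ' ⟨x, hx⟩ = true) := by
      rw [← hmemF ℓ x hx, ← hmemF ℓ' x hx, h]
    cases h' : ℓ ⟨x, hx⟩ <;> cases h'' : ℓ' ⟨x, hx⟩ <;> simp_all
  have hLfin : L.Finite := Set.toFinite L
  set 𝒜 : Finset (Finset X) := hLfin.toFinset.image F with hAdef
  have hcardA : 𝒜.card = L.ncard := by
    rw [hAdef, Finset.card_image_of_injective _ hFinj, Set.ncard_eq_toFinset_card L hLfin]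
  -- every set shattered by 𝒜 lies in Tset
  have hshat : ∀ T ∈ 𝒜.shatterer, T ∈ Tset := by
    intro T hT'
    rw [Finset.mem_shatterer] at hT'
    have hTS : T ⊆ S := by
      obtain ⟨u, hu, hTu⟩ := hT'.exists_superset
      obtain ⟨ℓ, _, rfl⟩ := Finset.mem_image.1 hu
      exact hTu.trans (hFsub ℓ)
    refine ⟨hTS, ?_⟩
    intro g
    have hU : T.filter (fun x => g x = true) ⊆ T := Finset.filter_subset _ _
    obtain ⟨A, hA, hTA⟩ := hT' hU
    obtain ⟨ℓ, hℓL, rfl⟩ := Finset.mem_image.1 hA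
    rw [Set.Finite.mem_toFinset] at hℓL
    obtain ⟨h, hhH, hhℓ⟩ := hℓL
    refine ⟨h, hhH, fun x hxT => ?_⟩
    have hxS := hTS hxT
    have h2 : (ℓ ⟨x, hxS⟩ = true) ↔ (g x = true) := by
      rw [← hmemF ℓ x hxS]
      constructor
      · intro hx
        have := hTA ▸ (Finset.mem_inter.2 ⟨hxT, hx⟩)
        exact (Finset.mem_filter.1 this).2
      · intro hg
        have : x ∈ T ∩ F ℓ := hTA ▸ (Finset.mem_filter.2 ⟨hxT, hg⟩)
        exact (Finset.mem_inter.1 this).2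
    have h3 : h x = ℓ ⟨x, hxS⟩ := hhℓ ⟨x, hxS⟩
    rw [h3]
    cases h' : ℓ ⟨x, hxS⟩ <;> cases h'' : g x <;> simp_all
  have hTfin : Tset.Finite := by
    apply Set.Finite.subset (S.powerset : Finset (Finset X)).finite_toSet
    intro T hT
    exact Finset.mem_coe.2 (Finset.mem_powerset.2 hT.1)
  constructor
  · -- Pajor's lemma
    calc L.ncard = 𝒜.card := hcardA.symm
      _ ≤ 𝒜.shatterer.card := Finset.card_le_card_shatterer 𝒜
      _ = (↑𝒜.shatterer : Set (Finset X)).ncard := (Set.ncard_coe_finset _).symm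
      _ ≤ Tset.ncard := Set.ncard_le_ncard (fun T hT => hshat T hT) hTfin
  · -- counting shattered sets
    have hcard : ∀ T ∈ Tset, T.card ≤ d := by
      rintro T ⟨hTS, hSh⟩
      rw [hd, vcDim]
      apply le_csSup
      · exact ⟨S.card, fun k hk => by
          obtain ⟨T', hT', hc, _⟩ := hk
          exact hc ▸ Finset.card_le_card hT'⟩
      · exact ⟨T, hTS, rfl, hSh⟩
    set B : Finset (Finset X) := (Finset.range (d + 1)).biUnion fun i => S.powersetCard i
      with hBdef
    have hsub : Tset ⊆ (B : Set (Finset X)) := by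
      rintro T ⟨hTS, hSh⟩
      rw [hBdef]
      simp only [Finset.coe_biUnion, Finset.mem_coe, Set.mem_iUnion]
      exact ⟨T.card, Finset.mem_range.2 (Nat.lt_succ_of_le (hcard T ⟨hTS, hSh⟩)),
        Finset.mem_powersetCard.2 ⟨hTS, rfl⟩⟩
    calc Tset.ncard ≤ (B : Set (Finset X)).ncard :=
          Set.ncard_le_ncard hsub B.finite_toSet
      _ = B.card := Set.ncard_coe_finset _
      _ ≤ ∑ i ∈ Finset.range (d + 1), (S.powersetCard i).card := Finset.card_biUnion_le
      _ = ∑ i ∈ Finset.range (d + 1), (S.card).choose i := by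
          exact Finset.sum_congr rfl fun i _ => Finset.card_powersetCard i S
end

section
/- Any set of n linearly independent vectors in ℝ^n is shattered by the class of halfspaces x ↦ sign(w_0 + ⟨w, x⟩). -/
/-- The class of (affine) halfspaces on `ℝ^n`. -/
def Halfspaces (n : ℕ) : Set ((Fin n → ℝ) → Bool) :=
  {f | ∃ (w₀ : ℝ) (w : Fin n → ℝ), ∀ x, f x = true ↔ 0 < w₀ + ∑ i, w i * x i}

/-- Any set of `n` linearly independent vectors in `ℝ^n` is shattered by halfspaces. -/
theorem linearIndependent_shattered_by_halfspaces {n : ℕ}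
    (S : Finset (Fin n → ℝ)) (hcard : S.card = n)
    (hli : LinearIndependent ℝ (fun v : ↥S => (v : Fin n → ℝ))) :
    Shatters (Halfspaces n) S := by
  intro ℓ
  rcases Nat.eq_zero_or_pos n with hn | hn
  · subst hn
    have hS : S = ∅ := Finset.card_eq_zero.mp hcard
    refine ⟨fun x => decide (0 < (0:ℝ) + ∑ i, (0:ℝ) * x i), ⟨0, 0, fun x => by simp⟩, ?_⟩
    simp [hS]
  · have : Nonempty ↥S := Finset.nonempty_coe_sort.mpr (Finset.card_pos.mp (by omega))
    have hc : Fintype.card ↥S = Module.finrank ℝ (Fin n → ℝ) := by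
      simp [hcard]
    let B := basisOfLinearIndependentOfCardEqFinrank hli hc
    let φ : (Fin n → ℝ) →ₗ[ℝ] ℝ :=
      B.constr ℝ (fun v => if ℓ (v : Fin n → ℝ) = true then (1:ℝ) else -1)
    set w : Fin n → ℝ := fun i => φ (fun j => if i = j then 1 else 0) with hw
    have hφ : ∀ x : Fin n → ℝ, φ x = ∑ i, w i * x i := by
      intro x
      rw [LinearMap.pi_apply_eq_sum_univ φ x]
      simp [hw, mul_comm]
    refine ⟨fun x => decide (0 < (0:ℝ) + ∑ i, w i * x i), ⟨0, w, fun x => by simp⟩, ?_⟩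
    intro x hx
    have hBx : φ x = if ℓ x = true then (1:ℝ) else -1 := by
      have hb : (B ⟨x, hx⟩ : Fin n → ℝ) = x := by
        simp [B, coe_basisOfLinearIndependentOfCardEqFinrank]
      have h2 := B.constr_basis ℝ (fun v => if ℓ (v : Fin n → ℝ) = true then (1:ℝ) else -1) ⟨x, hx⟩
      rw [hb] at h2
      exact h2
    show decide (0 < (0:ℝ) + ∑ i, w i * x i) = ℓ x
    rw [← hφ x, zero_add] at *
    cases hℓ : ℓ x <;> simp [hℓ] at hBx ⊢ <;> rw [hBx] <;> norm_num
end

section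
/- Let H be a class of Boolean functions with VC dimension d, and let T be a finite set with |T| ≥ Kd, where K > 1 satisfies K ln 2 > 1 + ln K. Then for sufficiently small constant ε > 0, the number of labellings ℓ : T → {0,1} that agree with some h ∈ H on all but at most ε|T| points of T is at most (e|T|/d)^d · (e/ε)^{ε|T|}, and hence a uniformly random labelling of T is ε-far (in normalized Hamming distance on T) from every h ∈ H with probability at least 1 − e^{−Ld} for some constant L > 0. -/
open Finset Real

lemma sum_choose_Iic_le_rpow {m j : ℕ} {x : ℝ} (hx₀ : 0 < x) (hx₁ : x ≤ 1)
    (hj : (j : ℝ) ≤ x * m) :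
    ∑ k ∈ Iic j, (m.choose k : ℝ) ≤ (exp 1 / x) ^ (x * m) := by
  have hjm : j ≤ m := by
    have : x * m ≤ m := mul_le_of_le_one_left (by positivity) hx₁
    exact_mod_cast hj.trans this
  have key : (∑ k ∈ Iic j, (m.choose k : ℝ)) * x ^ (x * m) ≤ exp (x * m) :=
    calc (∑ k ∈ Iic j, (m.choose k : ℝ)) * x ^ (x * m)
        ≤ ∑ k ∈ Iic j, (m.choose k : ℝ) * x ^ k := by
          rw [sum_mul]
          gcongr with k hk
          rw [← rpow_natCast]
          exact rpow_le_rpow_of_exponent_ge hx₀ hx₁ ((Nat.cast_le.2 (mem_Iic.1 hk)).trans hj)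
      _ ≤ ∑ k ∈ range (m + 1), (m.choose k : ℝ) * x ^ k := by
          refine sum_le_sum_of_subset_of_nonneg (fun k hk => ?_) (fun k _ _ => by positivity)
          exact mem_range.2 (Nat.lt_succ_of_le ((mem_Iic.1 hk).trans hjm))
      _ = (x + 1) ^ m := by rw [add_pow]; simp [mul_comm]
      _ ≤ exp x ^ m := by gcongr; exact add_one_le_exp x
      _ = exp (x * m) := by rw [← exp_nat_mul, mul_comm]
  rwa [div_rpow (exp_pos 1).le hx₀.le, exp_one_rpow, le_div_iff₀ (rpow_pos_of_pos hx₀ _)]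

lemma card_hammingBall_le {α : Type*} [Fintype α] [DecidableEq α] (g : α → Bool) (j : ℕ) :
    #{ℓ | hammingDist g ℓ ≤ j} ≤ ∑ k ∈ Iic j, (Fintype.card α).choose k := by
  simp_rw [← card_univ, ← card_powersetCard]
  refine le_trans (card_le_card_of_injOn (fun ℓ => ({x | g x ≠ ℓ x} : Finset α)) ?_ ?_)
    card_biUnion_le
  · intro ℓ hℓ
    exact mem_biUnion.2 ⟨_, mem_Iic.2 (mem_filter.1 hℓ).2, mem_powersetCard_univ.2 rfl⟩
  · -- over `Bool`, a labelling is determined by the points where it differs from `g`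
    intro ℓ₁ _ ℓ₂ _ h
    funext x
    have := congrArg (x ∈ ·) h
    simp only [mem_filter, mem_univ, true_and, eq_iff_iff] at this
    revert this
    cases g x <;> cases ℓ₁ x <;> cases ℓ₂ x <;> simp

noncomputable def restrictTo {X : Type*} (H : Set (X → Bool)) (T : Finset X) : Finset (T → Bool) :=
  (Set.toFinite ((fun h (x : T) => h x) '' H)).toFinset

lemma mem_restrictTo {X : Type*} {H : Set (X → Bool)} {T : Finset X} {g : T → Bool} :
    g ∈ restrictTo H T ↔ ∃ h ∈ H, (fun x : T => h x) = g := by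
  simp [restrictTo]

lemma card_restrictTo_le {X : Type*} {H : Set (X → Bool)} {d : ℕ}
    (hVC : ∀ T' : Finset X, Shatters H T' → T'.card ≤ d) (T : Finset X) :
    #(restrictTo H T) ≤ ∑ k ∈ Iic d, T.card.choose k := by
  classical
  set 𝒜 := (restrictTo H T).image fun g => ({x | g x = true} : Finset T)
  have h𝒜 : #𝒜 = #(restrictTo H T) := by
    refine card_image_of_injective _ fun g g' hg => funext fun x => ?_
    simpa using congrArg (x ∈ ·) hg
  have hvc : 𝒜.vcDim ≤ d := by
    refine Finset.sup_le fun s hs => ?_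
    have : Shatters H (s.map (Function.Embedding.subtype _)) := by
      intro ℓ
      obtain ⟨A, hA, hsA⟩ := (mem_shatterer.1 hs) (filter_subset (fun x : T => ℓ x = true) s)
      obtain ⟨g, hg, rfl⟩ := mem_image.1 hA
      obtain ⟨h, hH, rfl⟩ := mem_restrictTo.1 hg
      refine ⟨h, hH, ?_⟩
      simp only [mem_map, Function.Embedding.coe_subtype, forall_exists_index, and_imp]
      rintro _ x hx rfl
      have := congrArg (x ∈ ·) hsA
      simp only [mem_inter, mem_filter, mem_univ, true_and, hx, eq_iff_iff] at this
      simpa using this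
    simpa using hVC _ this
  calc #(restrictTo H T) = #𝒜 := h𝒜.symm
    _ ≤ #𝒜.shatterer := card_le_card_shatterer 𝒜
    _ ≤ ∑ k ∈ Iic 𝒜.vcDim, (Fintype.card T).choose k := card_shatterer_le_sum_vcDim
    _ ≤ _ := by rw [Fintype.card_coe]; exact sum_le_sum_of_subset (Iic_subset_Iic.2 hvc)

lemma ncard_close_le_card_restrictTo_mul {X : Type*} (H : Set (X → Bool)) (T : Finset X) (j : ℕ) :
    {ℓ : T → Bool | ∃ h ∈ H, #(T.attach.filter fun x => h x.1 ≠ ℓ x) ≤ j}.ncard ≤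
      #(restrictTo H T) * ∑ k ∈ Iic j, T.card.choose k := by
  classical
  have : {ℓ : T → Bool | ∃ h ∈ H, #(T.attach.filter fun x => h x.1 ≠ ℓ x) ≤ j} =
      ↑((restrictTo H T).biUnion fun g => {ℓ | hammingDist g ℓ ≤ j}) := by
    ext ℓ
    simp only [Set.mem_ofPred_eq, coe_biUnion, mem_coe, mem_filter_univ, Set.mem_iUnion,
      exists_prop, mem_restrictTo, hammingDist, ← univ_eq_attach]
    constructor
    · rintro ⟨h, hH, hj⟩
      exact ⟨_, ⟨h, hH, rfl⟩, hj⟩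
    · rintro ⟨_, ⟨h, hH, rfl⟩, hj⟩
      exact ⟨h, hH, hj⟩
  rw [this, Set.ncard_coe_finset]
  refine card_biUnion_le_card_mul _ _ _ fun g _ => ?_
  simpa using card_hammingBall_le g j

lemma exp_one_div_rpow_mul_self {x : ℝ} (hx : 0 < x) (m : ℝ) :
    (exp 1 / x) ^ (x * m) = exp (m * (x * (1 - log x))) := by
  rw [rpow_def_of_pos (by positivity), log_div (exp_pos 1).ne' hx.ne', log_exp]
  ring_nf

lemma exp_one_mul_div_pow_eq_rpow {m d : ℕ} (hm : 0 < m) :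
    (exp 1 * m / d) ^ d = (exp 1 / (d / m)) ^ ((d / m : ℝ) * m) := by
  have hm' : (m : ℝ) ≠ 0 := by positivity
  rw [div_mul_cancel₀ _ hm', rpow_natCast, div_div_eq_mul_div]

lemma monotoneOn_mul_one_sub_log : MonotoneOn (fun x : ℝ => x * (1 - log x)) (Set.Ioc 0 1) := by
  rintro a ⟨ha, -⟩ b ⟨hb, hb₁⟩ hab
  have hlog_ba : a * log (b / a) ≤ b - a := by
    have := mul_le_mul_of_nonneg_left (log_le_sub_one_of_pos (div_pos hb ha)) ha.le
    rwa [mul_sub, mul_div_cancel₀ _ ha.ne', mul_one] at this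
  rw [log_div hb.ne' ha.ne'] at hlog_ba
  nlinarith [mul_nonneg (sub_nonneg.2 hab) (neg_nonneg.2 (log_nonpos hb.le hb₁))]

lemma mul_one_sub_log_le_two_mul_sqrt {ε : ℝ} (hε : 0 < ε) : ε * (1 - log ε) ≤ 2 * √ε := by
  have hs : 0 < √ε := sqrt_pos.2 hε
  calc ε * (1 - log ε) = √ε ^ 2 * (1 - 2 * log √ε) := by
        rw [log_sqrt hε.le, sq_sqrt hε.le]; ring
    _ ≤ √ε ^ 2 * (1 - 2 * (1 - (√ε)⁻¹)) := by
        gcongr; exact one_sub_inv_le_log_of_pos hs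
    _ = 2 * √ε - √ε ^ 2 := by field_simp; ring
    _ ≤ 2 * √ε := by linarith [sq_nonneg √ε]

lemma exp_one_div_rpow_mul_le {t t₀ ε L : ℝ} {m : ℕ} (ht : 0 < t) (htt₀ : t ≤ t₀) (ht₀ : t₀ ≤ 1)
    (hε : 0 < ε) (hL : 0 ≤ L)
    (hsum : t₀ * (1 - log t₀) + ε * (1 - log ε) + L * t₀ ≤ log 2) :
    (exp 1 / t) ^ (t * m) * (exp 1 / ε) ^ (ε * m) ≤ exp (-(L * (t * m))) * 2 ^ m := by
  have hφ : t * (1 - log t) ≤ t₀ * (1 - log t₀) :=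
    monotoneOn_mul_one_sub_log ⟨ht, htt₀.trans ht₀⟩ ⟨ht.trans_le htt₀, ht₀⟩ htt₀
  have hLt : L * t ≤ L * t₀ := mul_le_mul_of_nonneg_left htt₀ hL
  have hsum' : (m : ℝ) * (t * (1 - log t) + ε * (1 - log ε) + L * t) ≤ m * log 2 := by
    gcongr; linarith
  rw [exp_one_div_rpow_mul_self ht, exp_one_div_rpow_mul_self hε, ← exp_add,
    ← rpow_natCast, rpow_def_of_pos two_pos, ← exp_add, exp_le_exp]
  linarith

lemma ncard_close_le_pow_mul_rpow {X : Type*} {H : Set (X → Bool)} {d : ℕ}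
    (hVC : ∀ T' : Finset X, Shatters H T' → T'.card ≤ d) (hd : 0 < d) (T : Finset X)
    (hdT : d ≤ T.card) {ε : ℝ} (hε : 0 < ε) (hε₁ : ε ≤ 1) :
    (Set.ncard {ℓ : T → Bool | ∃ h ∈ H,
        ((T.attach.filter fun x => h x.1 ≠ ℓ x).card : ℝ) ≤ ε * T.card} : ℝ) ≤
      (exp 1 * T.card / d) ^ d * (exp 1 / ε) ^ (ε * T.card) := by
  set m := T.card
  have hm : 0 < m := hd.trans_le hdT
  have hfloor : {ℓ : T → Bool | ∃ h ∈ H,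
        ((T.attach.filter fun x => h x.1 ≠ ℓ x).card : ℝ) ≤ ε * m} =
      {ℓ : T → Bool | ∃ h ∈ H, #(T.attach.filter fun x => h x.1 ≠ ℓ x) ≤ ⌊ε * m⌋₊} := by
    simp only [Nat.le_floor_iff (by positivity : 0 ≤ ε * m)]
  rw [hfloor, exp_one_mul_div_pow_eq_rpow hm]
  calc _ ≤ ((#(restrictTo H T) * ∑ k ∈ Iic ⌊ε * m⌋₊, m.choose k : ℕ) : ℝ) := by
        exact_mod_cast ncard_close_le_card_restrictTo_mul H T _
    _ ≤ (∑ k ∈ Iic d, (m.choose k : ℝ)) * ∑ k ∈ Iic ⌊ε * m⌋₊, (m.choose k : ℝ) := by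
        push_cast
        gcongr
        exact_mod_cast card_restrictTo_le hVC T
    _ ≤ _ := by
        gcongr
        · exact sum_choose_Iic_le_rpow (by positivity)
            ((div_le_one (by positivity)).2 (by exact_mod_cast hdT))
            (div_mul_cancel₀ _ (by positivity)).ge
        · exact sum_choose_Iic_le_rpow hε hε₁ (Nat.floor_le (by positivity))

/-- If `H` has VC dimension (at most) `d` and `|T| ≥ Kd` with `K > 1`,
`K ln 2 > 1 + ln K`, then for all sufficiently small `ε > 0`: the number of
labellings of `T` that are `ε`-close to some `h ∈ H` is at most
`(e|T|/d)^d (e/ε)^{ε|T|}`, and a uniformly random labelling of `T` is `ε`-far from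
every `h ∈ H` except with probability at most `e^{−Ld}` for some constant `L > 0`. -/
theorem random_labelling_far (K : ℝ) (hK : 1 < K) (hKln : 1 + Real.log K < K * Real.log 2) :
    ∃ L > (0 : ℝ), ∃ ε₀ > (0 : ℝ), ∀ ε : ℝ, 0 < ε → ε < ε₀ →
      ∀ (X : Type) (H : Set (X → Bool)) (d : ℕ), 0 < d →
        (∀ T' : Finset X, Shatters H T' → T'.card ≤ d) →
        ∀ T : Finset X, K * d ≤ (T.card : ℝ) →
          ((Set.ncard {ℓ : (↥T) → Bool | ∃ h ∈ H,
              ((T.attach.filter (fun x => h x.1 ≠ ℓ x)).card : ℝ) ≤ ε * T.card} : ℝ)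
            ≤ (Real.exp 1 * T.card / d) ^ (d : ℕ) *
              (Real.exp 1 / ε) ^ (ε * T.card)) ∧
          ((Set.ncard {ℓ : (↥T) → Bool | ¬ ∀ h ∈ H,
              ε * T.card < ((T.attach.filter (fun x => h x.1 ≠ ℓ x)).card : ℝ)} : ℝ)
            ≤ Real.exp (-(L * d)) * 2 ^ T.card) := by
  have hK₀ : 0 < K := one_pos.trans hK
  -- half of the slack `c` absorbs the `ε`-term, the other half is the rate `L`
  set c := K * log 2 - 1 - log K
  have hc : 0 < c := by linarith
  refine ⟨c / 2, by positivity, min 1 ((c / (4 * K)) ^ 2), by positivity, ?_⟩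
  intro ε hε hεε₀ X H d hd hVC T hT
  obtain ⟨hε₁, hεc⟩ := lt_min_iff.1 hεε₀
  have hdT : (d : ℝ) ≤ T.card := le_trans (by nlinarith) hT
  have hm : 0 < T.card := hd.trans_le (by exact_mod_cast hdT)
  have hclose := ncard_close_le_pow_mul_rpow hVC hd T (by exact_mod_cast hdT) hε hε₁.le
  refine ⟨hclose, ?_⟩
  have hsqrt : √ε ≤ c / (4 * K) := (sqrt_le_sqrt hεc.le).trans_eq (sqrt_sq (by positivity))
  have hsum : K⁻¹ * (1 - log K⁻¹) + ε * (1 - log ε) + c / 2 * K⁻¹ ≤ log 2 := by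
    have hε_small : ε * (1 - log ε) ≤ c / (2 * K) := by
      refine (mul_one_sub_log_le_two_mul_sqrt hε).trans ?_
      rw [show c / (2 * K) = 2 * (c / (4 * K)) by ring]
      gcongr
    have : K⁻¹ * (1 - log K⁻¹) + c / (2 * K) + c / 2 * K⁻¹ = log 2 := by
      rw [log_inv]; field_simp; ring
    linarith
  have hfar := exp_one_div_rpow_mul_le (m := T.card) (by positivity : (0 : ℝ) < d / T.card)
    ((div_le_iff₀ (by positivity)).2 (by rw [← div_eq_inv_mul, le_div_iff₀ hK₀]; linarith))
    (inv_le_one_of_one_le₀ hK.le) hε (by positivity) hsum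
  rw [← exp_one_mul_div_pow_eq_rpow hm, div_mul_cancel₀ _ (by positivity)] at hfar
  simpa only [not_forall, not_lt, exists_prop] using hclose.trans hfar
end

section
/- Let (X, Y, E) be a finite bipartite partial order (x < y iff (x,y) ∈ E), p a probability distribution on X ∪ Y, and f : X ∪ Y → {0,1}. For x with f(x)=1 let q(x) be the total p-mass of points y ∈ Y with f(y)=0 and x < y. If ∑_{x ∈ X : f(x)=1} min(p(x), q(x)) < ε, then there exists a monotone function h on (X,Y,E) with Pr_{z∼p}[f(z) ≠ h(z)] < ε. -/
/-! Each `x ∈ X` with `f x = 1` is either lowered to `0`, at cost `p x`, or kept, in which case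
the points of `Y` it forces up to `1` cost at most `q x` by a union bound. Keeping `x` exactly when
`q x ≤ p x` makes every such `x` cost at most `min (p x) (q x)`. -/

open Finset

theorem Finset.sum_ite_exists_le_sum_ite_sum {ι κ M : Type*} [Fintype ι] [Fintype κ]
    [AddCommMonoid M] [PartialOrder M] [IsOrderedAddMonoid M] {w : κ → M} (hw : ∀ j, 0 ≤ w j)
    (S : ι → Prop) [DecidablePred S] (R : ι → κ → Prop) [∀ i, DecidablePred (R i)] :
    ∑ j, (if ∃ i, S i ∧ R i j then w j else 0) ≤
      ∑ i, if S i then ∑ j, (if R i j then w j else 0) else 0 := by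
  have hterm_nonneg : ∀ i j, 0 ≤ if S i ∧ R i j then w j else 0 := fun i j => by
    split_ifs
    exacts [hw j, le_rfl]
  calc ∑ j, (if ∃ i, S i ∧ R i j then w j else 0)
      ≤ ∑ j, ∑ i, (if S i ∧ R i j then w j else 0) := by
        refine sum_le_sum fun j _ => ?_
        split_ifs with hj
        · obtain ⟨i, hi⟩ := hj
          exact (if_pos hi).ge.trans
            (single_le_sum (fun i _ => hterm_nonneg i j) (mem_univ i))
        · exact sum_nonneg fun i _ => hterm_nonneg i j
    _ = ∑ i, if S i then ∑ j, (if R i j then w j else 0) else 0 := by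
        rw [sum_comm]
        simp only [ite_and, sum_ite_irrel, sum_const_zero]

namespace BipartiteCorrection

variable {X Y : Type*} (E : X → Y → Prop) (p : X ⊕ Y → ℝ) (f : X ⊕ Y → Bool) (q : X → ℝ)

def IsKept (x : X) : Prop :=
  f (.inl x) = true ∧ q x ≤ p (.inl x)

open Classical in
noncomputable def correction : X ⊕ Y → Bool
  | .inl x => decide (IsKept p f q x)
  | .inr y => f (.inr y) || decide (∃ x, IsKept p f q x ∧ E x y)

variable {E p f q}

theorem correction_monotone {x : X} {y : Y} (hxy : E x y) :
    correction E p f q (.inl x) ≤ correction E p f q (.inr y) := by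
  by_cases hx : IsKept p f q x
  · have hy : correction E p f q (.inr y) = true := by
      simpa [correction] using Or.inr ⟨x, hx, hxy⟩
    simp [hy]
  · simp [correction, hx]

theorem correction_inl_ne_iff (x : X) :
    f (.inl x) ≠ correction E p f q (.inl x) ↔ f (.inl x) = true ∧ p (.inl x) < q x := by
  cases h : f (.inl x) <;> simp [correction, IsKept, h]

theorem correction_inr_ne_iff (y : Y) :
    f (.inr y) ≠ correction E p f q (.inr y) ↔
      ∃ x, IsKept p f q x ∧ (f (.inr y) = false ∧ E x y) := by
  cases h : f (.inr y) <;> simp [correction, h]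

open Classical in
theorem sum_ite_ne_correction_le [Fintype X] [Fintype Y] (hp : ∀ z, 0 ≤ p z)
    (hq : ∀ x : X, q x =
      ∑ y : Y, if f (.inr y) = false ∧ E x y then p (.inr y) else 0) :
    (∑ z : X ⊕ Y, if f z ≠ correction E p f q z then p z else 0) ≤
      ∑ x : X, if f (.inl x) = true then min (p (.inl x)) (q x) else 0 := by
  calc (∑ z : X ⊕ Y, if f z ≠ correction E p f q z then p z else 0)
      = (∑ x : X, if f (.inl x) = true ∧ p (.inl x) < q x then p (.inl x) else 0) +
        ∑ y : Y, if ∃ x, IsKept p f q x ∧ (f (.inr y) = false ∧ E x y) then p (.inr y) else 0 := by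
        simp only [Fintype.sum_sum_type, correction_inl_ne_iff, correction_inr_ne_iff]
    _ ≤ (∑ x : X, if f (.inl x) = true ∧ p (.inl x) < q x then p (.inl x) else 0) +
        ∑ x : X, if IsKept p f q x then q x else 0 := by
        simp only [hq]
        gcongr
        exact sum_ite_exists_le_sum_ite_sum (fun y => hp _) _ _
    _ = ∑ x : X, if f (.inl x) = true then min (p (.inl x)) (q x) else 0 := by
        rw [← sum_add_distrib]
        refine sum_congr rfl fun x _ => ?_
        cases hf : f (.inl x)
        · simp [IsKept, hf]
        · by_cases hqp : q x ≤ p (.inl x)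
          · simp [IsKept, hf, hqp]
          · simp [IsKept, hf, hqp, not_le.mp hqp, (not_le.mp hqp).le]

end BipartiteCorrection

open Classical in
theorem bipartite_monotone_correction_general
    {X Y : Type*} [Fintype X] [Fintype Y] (E : X → Y → Prop)
    (p : X ⊕ Y → ℝ) (hp : ∀ z, 0 ≤ p z)
    (f : X ⊕ Y → Bool) (ε : ℝ)
    (q : X → ℝ)
    (hq : ∀ x : X, q x =
      ∑ y : Y, if f (Sum.inr y) = false ∧ E x y then p (Sum.inr y) else 0)
    (hcheap : (∑ x : X, if f (Sum.inl x) = true then min (p (Sum.inl x)) (q x) else 0) < ε) :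
    ∃ h : X ⊕ Y → Bool,
      (∀ (x : X) (y : Y), E x y → h (Sum.inl x) ≤ h (Sum.inr y)) ∧
      (∑ z : X ⊕ Y, if f z ≠ h z then p z else 0) < ε :=
  ⟨BipartiteCorrection.correction E p f q, fun _ _ => BipartiteCorrection.correction_monotone,
    (BipartiteCorrection.sum_ite_ne_correction_le hp hq).trans_lt hcheap⟩

open Classical in
/-- Bipartite monotonicity correction: if the total weight of cheaply fixable
violations is below `ε`, then `f` is `ε`-close to a monotone function on the
bipartite partial order `(X, Y, E)`. -/
theorem bipartite_monotone_correction
    {X Y : Type*} [Fintype X] [Fintype Y] (E : X → Y → Prop)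
    (p : X ⊕ Y → ℝ) (hp : ∀ z, 0 ≤ p z) (hsum : ∑ z, p z = 1)
    (f : X ⊕ Y → Bool) (ε : ℝ)
    (q : X → ℝ)
    (hq : ∀ x : X, q x =
      ∑ y : Y, if f (Sum.inr y) = false ∧ E x y then p (Sum.inr y) else 0)
    (hcheap : (∑ x : X, if f (Sum.inl x) = true then min (p (Sum.inl x)) (q x) else 0) < ε) :
    ∃ h : X ⊕ Y → Bool,
      (∀ (x : X) (y : Y), E x y → h (Sum.inl x) ≤ h (Sum.inr y)) ∧
      (∑ z : X ⊕ Y, if f z ≠ h z then p z else 0) < ε :=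
  bipartite_monotone_correction_general E p hp f ε q hq hcheap
end
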